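/- arXiv:1911.08052 — 2 statements merged into one kernel-verified Lean document; each statement's English description precedes it below -/
import Mathlib

section
/- Let f_1,…,f_k be monic real polynomials all of the same degree n. Then f_1,…,f_k have a common interlacing if and only if every convex combination Σ λ_i f_i (with λ_i ≥ 0, Σ λ_i = 1) is real-rooted. -/
open scoped Classical
open Polynomial

/-- A real polynomial is real-rooted if it has a full set of real roots
(counted with multiplicity). -/
def RealRooted (f : Polynomial ℝ) : Prop := Multiset.card f.roots = f.natDegree

/-- The roots of a real polynomial, sorted in increasing order. -/
noncomputable def sortedRoots (f : Polynomial ℝ) : List ℝ := f.roots.sort (· ≤ ·)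

/-- `g` interlaces `f`: both are real-rooted, `deg g = deg f - 1`, and the sorted
roots satisfy `β₁ ≤ α₁ ≤ β₂ ≤ ⋯ ≤ α_{n-1} ≤ β_n`. -/
def Interlaces (g f : Polynomial ℝ) : Prop :=
  RealRooted f ∧ RealRooted g ∧ g.natDegree + 1 = f.natDegree ∧
  ∀ k, k < g.natDegree →
    (sortedRoots f).getD k 0 ≤ (sortedRoots g).getD k 0 ∧
    (sortedRoots g).getD k 0 ≤ (sortedRoots f).getD (k + 1) 0

/-- The largest real root of a polynomial. -/
noncomputable def maxRoot (f : Polynomial ℝ) : ℝ := sSup {x : ℝ | f.IsRoot x}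

/-!
A common interlacing exists iff the `j`-th root of every `f i` is at most the `j'`-th root of
every `f i'` whenever `j < j'`: given this, `α_j = max_i β_j(f i)` interlaces every `f i`.

Under this condition, shifting the `j`-th roots by `(j + 1) ε` makes all these inequalities strict.
Then at a point separating the first `m` roots of every `f i` from the others, every `f i`, hence
every convex combination, has sign `(-1) ^ (n - m)`; these `n + 1` points enclose `n` distinct
real roots. Letting `ε → 0`, real-rootedness survives: the root vectors stay in a compact set,
and each of their cluster points is the root vector of the limit.

Conversely, suppose `β_j(P) > β_j'(Q)` with `j < j'`, and that all of `(1 - t) P + t Q` are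
real-rooted. Their sorted roots depend continuously on `t`, so each `c` strictly between the two is
hit by both the `j`-th and the `j'`-th root curve. As `c` is a root of `(1 - t) P + t Q` for at
most one `t` (when `P c ≠ 0`), it is a double root there, so the Wronskian `P Q' - P' Q` vanishes
at `c`. Vanishing on an interval forces `P = Q`, which contradicts `β_j(P) > β_j'(P)`.
-/

open Filter Topology

lemma coe_sortedRoots (p : ℝ[X]) : (sortedRoots p : Multiset ℝ) = p.roots :=
  Multiset.sort_eq _ _

lemma pairwise_sortedRoots (p : ℝ[X]) : (sortedRoots p).Pairwise (· ≤ ·) :=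
  Multiset.pairwise_sort _ _

lemma length_sortedRoots (p : ℝ[X]) : (sortedRoots p).length = Multiset.card p.roots :=
  Multiset.length_sort _

/-- Padded with `0` when `p` has fewer than `n` real roots. -/
noncomputable def rootVec (n : ℕ) (p : ℝ[X]) : Fin n → ℝ :=
  fun i => (sortedRoots p).getD i 0

section rootVec

variable {n : ℕ} {p : ℝ[X]}

lemma rootVec_eq_getElem (h : Multiset.card p.roots = n) (i : Fin n) :
    rootVec n p i = (sortedRoots p)[(i : ℕ)]'(by rw [length_sortedRoots, h]; exact i.2) :=
  List.getD_eq_getElem _ _ _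

lemma map_rootVec (h : Multiset.card p.roots = n) :
    Finset.univ.val.map (rootVec n p) = p.roots := by
  rw [Fin.univ_val_map, ← coe_sortedRoots]
  congr 1
  refine List.ext_getElem (by simp [length_sortedRoots, h]) fun i _ _ => ?_
  rw [List.getElem_ofFn, rootVec_eq_getElem h]

lemma rootVec_mem_roots (h : Multiset.card p.roots = n) (i : Fin n) : rootVec n p i ∈ p.roots :=
  map_rootVec h ▸ Multiset.mem_map_of_mem _ (Finset.mem_univ_val i)

lemma rootVec_monotone (h : Multiset.card p.roots = n) : Monotone (rootVec n p) := by
  intro i j hij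
  rcases hij.eq_or_lt with rfl | hlt
  · rfl
  rw [rootVec_eq_getElem h, rootVec_eq_getElem h]
  exact List.pairwise_iff_getElem.1 (pairwise_sortedRoots p) _ _ _ _ hlt

end rootVec

noncomputable def prodXSubC {n : ℕ} (r : Fin n → ℝ) : ℝ[X] := ∏ i, (X - C (r i))

section prodXSubC

variable {n : ℕ} (r : Fin n → ℝ)

lemma monic_prodXSubC : (prodXSubC r).Monic :=
  monic_prod_of_monic _ _ fun i _ => monic_X_sub_C (r i)

lemma natDegree_prodXSubC : (prodXSubC r).natDegree = n := by
  simp [prodXSubC, natDegree_prod_of_monic _ _ fun i _ => monic_X_sub_C (r i)]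

lemma prodXSubC_eq_multiset_prod :
    prodXSubC r = ((Finset.univ.val.map r).map fun a => X - C a).prod := by
  rw [Multiset.map_map]
  rfl

lemma roots_prodXSubC : (prodXSubC r).roots = Finset.univ.val.map r := by
  rw [prodXSubC_eq_multiset_prod, roots_multiset_prod_X_sub_C]

lemma realRooted_prodXSubC : RealRooted (prodXSubC r) := by
  simp [RealRooted, roots_prodXSubC, natDegree_prodXSubC]

lemma eval_prodXSubC (x : ℝ) : (prodXSubC r).eval x = ∏ i, (x - r i) := by
  simp [prodXSubC, eval_prod]

variable {r}

lemma rootVec_prodXSubC (hr : Monotone r) : rootVec n (prodXSubC r) = r := by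
  have hsorted : sortedRoots (prodXSubC r) = List.ofFn r := by
    refine List.Perm.eq_of_pairwise' (pairwise_sortedRoots _)
      (List.pairwise_ofFn.2 fun i j hij => hr hij.le) ?_
    rw [← Multiset.coe_eq_coe, coe_sortedRoots, roots_prodXSubC, Fin.univ_val_map]
  funext i
  simp [rootVec, hsorted]

end prodXSubC

lemma eq_prodXSubC_rootVec {n : ℕ} {p : ℝ[X]} (hm : p.Monic) (hr : RealRooted p)
    (hd : p.natDegree = n) : p = prodXSubC (rootVec n p) := by
  rw [prodXSubC_eq_multiset_prod, map_rootVec (hr.trans hd),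
    prod_multiset_X_sub_C_of_monic_of_roots_card_eq hm hr]

lemma interlaces_iff {n : ℕ} {g f : ℝ[X]} (hg : g.natDegree = n) (hf : f.natDegree = n + 1) :
    Interlaces g f ↔ RealRooted f ∧ RealRooted g ∧
      ∀ m : Fin n, rootVec (n + 1) f m.castSucc ≤ rootVec n g m ∧
        rootVec n g m ≤ rootVec (n + 1) f m.succ := by
  simp only [Interlaces, hg, hf, true_and, Fin.forall_iff]
  rfl

def RootsPairwiseInterlace {ι : Type*} (n : ℕ) (f : ι → ℝ[X]) : Prop :=
  ∀ i i' (j j' : Fin n), j < j' → rootVec n (f i) j ≤ rootVec n (f i') j'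

theorem exists_interlaces_iff_rootsPairwiseInterlace {ι : Type*} [Finite ι] {n : ℕ}
    {f : ι → ℝ[X]} (hd : ∀ i, (f i).natDegree = n + 1) :
    (∃ g : ℝ[X], g.Monic ∧ ∀ i, Interlaces g (f i)) ↔
      (∀ i, RealRooted (f i)) ∧ RootsPairwiseInterlace (n + 1) f := by
  constructor
  · rintro ⟨g, -, hg⟩
    refine ⟨fun i => (hg i).1, fun i i' j j' hjj' => ?_⟩
    have hgd : g.natDegree = n := by have := (hg i).2.2.1; rw [hd i] at this; omega
    set m : Fin n := j.castLT (by omega)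
    obtain ⟨-, -, hm⟩ := (interlaces_iff hgd (hd i)).1 (hg i)
    obtain ⟨hfi', -, hm'⟩ := (interlaces_iff hgd (hd i')).1 (hg i')
    calc rootVec (n + 1) (f i) j = rootVec (n + 1) (f i) m.castSucc := rfl
      _ ≤ rootVec n g m := (hm m).1
      _ ≤ rootVec (n + 1) (f i') m.succ := (hm' m).2
      _ ≤ rootVec (n + 1) (f i') j' :=
        rootVec_monotone (hfi'.trans (hd i')) (Fin.le_def.2 (by simp [m]; omega))
  · rintro ⟨hr, hpi⟩
    cases isEmpty_or_nonempty ι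
    · exact ⟨1, monic_one, isEmptyElim⟩
    set α : Fin n → ℝ := fun m => ⨆ i, rootVec (n + 1) (f i) m.castSucc
    have hbdd : ∀ m : Fin n, BddAbove (Set.range fun i => rootVec (n + 1) (f i) m.castSucc) :=
      fun m => Set.finite_range _ |>.bddAbove
    have hα : Monotone α := fun m m' hmm' => ciSup_mono (hbdd m') fun i =>
      rootVec_monotone ((hr i).trans (hd i)) (Fin.castSucc_le_castSucc_iff.2 hmm')
    refine ⟨prodXSubC α, monic_prodXSubC α, fun i => ?_⟩
    rw [interlaces_iff (natDegree_prodXSubC α) (hd i), rootVec_prodXSubC hα]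
    exact ⟨hr i, realRooted_prodXSubC α, fun m => ⟨le_ciSup (hbdd m) i,
      ciSup_le fun i' => hpi i' i _ _ m.castSucc_lt_succ⟩⟩

lemma negOnePow_mul_eval_prodXSubC_pos {n : ℕ} {r : Fin n → ℝ} {y : ℝ} {m : ℕ}
    (hlt : ∀ j : Fin n, (j : ℕ) < m → r j < y)
    (hgt : ∀ j : Fin n, m ≤ (j : ℕ) → y < r j) :
    0 < (-1) ^ (n - m) * (prodXSubC r).eval y := by
  have hcard : (Finset.univ.filter fun j : Fin n => m ≤ (j : ℕ)).card = n - m := by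
    have := Finset.card_filter_add_card_filter_not (s := Finset.univ)
      (fun j : Fin n => (j : ℕ) < m)
    simp only [not_lt, Fin.card_filter_val_lt, Finset.card_univ, Fintype.card_fin] at this
    omega
  rw [eval_prodXSubC, ← hcard, ← Finset.prod_const, Finset.prod_filter,
    ← Finset.prod_mul_distrib]
  refine Finset.prod_pos fun j _ => ?_
  split_ifs with h
  · linarith [hgt j h]
  · linarith [hlt j (not_le.1 h)]

lemma realRooted_of_eval_mul_eval_neg {n : ℕ} {F : ℝ[X]} (hF : F ≠ 0) (hd : F.natDegree = n)
    {y : Fin (n + 1) → ℝ} (hy : StrictMono y)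
    (hsign : ∀ m : Fin n, F.eval (y m.castSucc) * F.eval (y m.succ) < 0) : RealRooted F := by
  have hroot : ∀ m : Fin n, ∃ z ∈ Set.Ioo (y m.castSucc) (y m.succ), F.eval z = 0 := by
    intro m
    have hle := (hy m.castSucc_lt_succ).le
    rcases mul_neg_iff.1 (hsign m) with ⟨h1, h2⟩ | ⟨h1, h2⟩
    · exact intermediate_value_Ioo' hle F.continuous.continuousOn ⟨h2, h1⟩
    · exact intermediate_value_Ioo hle F.continuous.continuousOn ⟨h1, h2⟩
  choose z hz hzroot using hroot
  have hz_mono : StrictMono z := fun i j hij =>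
    calc z i < y i.succ := (hz i).2
      _ ≤ y j.castSucc := hy.monotone (Fin.le_def.2 (by simpa using hij))
      _ < z j := (hz j).1
  have hsub : Finset.univ.val.map z ≤ F.roots :=
    (Multiset.le_iff_subset (Finset.univ.nodup.map hz_mono.injective)).2
      fun x hx => by
        obtain ⟨m, -, rfl⟩ := Multiset.mem_map.1 hx
        exact (mem_roots hF).2 (hzroot m)
  refine le_antisymm (card_roots' F) ?_
  simpa [hd] using Multiset.card_le_card hsub

section ConvexCombination

variable {ι : Type*} [Fintype ι] {lam : ι → ℝ} {f : ι → ℝ[X]} {n : ℕ}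

lemma coeff_sum_smul_eq_one (hf : ∀ i, (f i).Monic) (hd : ∀ i, (f i).natDegree = n)
    (hsum : ∑ i, lam i = 1) : (∑ i, lam i • f i).coeff n = 1 := by
  have hc : ∀ i, (f i).coeff n = 1 := fun i => hd i ▸ (hf i).coeff_natDegree
  simp [finsetSum_coeff, hc, hsum]

lemma natDegree_sum_smul_le (hd : ∀ i, (f i).natDegree = n) :
    (∑ i, lam i • f i).natDegree ≤ n :=
  natDegree_sum_le_of_forall_le _ _ fun i _ => (natDegree_smul_le _ _).trans (hd i).le

lemma monic_sum_smul (hf : ∀ i, (f i).Monic) (hd : ∀ i, (f i).natDegree = n)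
    (hsum : ∑ i, lam i = 1) : (∑ i, lam i • f i).Monic :=
  monic_of_natDegree_le_of_coeff_eq_one n (natDegree_sum_smul_le hd)
    (coeff_sum_smul_eq_one hf hd hsum)

lemma natDegree_sum_smul (hf : ∀ i, (f i).Monic) (hd : ∀ i, (f i).natDegree = n)
    (hsum : ∑ i, lam i = 1) : (∑ i, lam i • f i).natDegree = n :=
  natDegree_eq_of_le_of_coeff_ne_zero (natDegree_sum_smul_le hd)
    (by rw [coeff_sum_smul_eq_one hf hd hsum]; exact one_ne_zero)

lemma exists_pos_of_sum_eq_one (hsum : ∑ i, lam i = 1) : ∃ i, 0 < lam i := by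
  obtain ⟨i, -, hi⟩ := Finset.exists_lt_of_sum_lt (s := Finset.univ) (f := 0) (g := lam)
    (by simp [hsum])
  exact ⟨i, hi⟩

lemma pos_mul_eval_sum_smul (hlam : ∀ i, 0 ≤ lam i) (hsum : ∑ i, lam i = 1) {e x : ℝ}
    (h : ∀ i, 0 < e * (f i).eval x) : 0 < e * (∑ i, lam i • f i).eval x := by
  obtain ⟨i₀, hi₀⟩ := exists_pos_of_sum_eq_one hsum
  simp only [eval_finsetSum, eval_smul, smul_eq_mul, Finset.mul_sum, mul_left_comm e]
  exact Finset.sum_pos' (fun i _ => mul_nonneg (hlam i) (h i).le)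
    ⟨i₀, Finset.mem_univ _, mul_pos hi₀ (h i₀)⟩

lemma abs_le_of_mem_roots_sum_smul (hf : ∀ i, (f i).Monic) (hd : ∀ i, (f i).natDegree = n)
    (hlam : ∀ i, 0 ≤ lam i) (hsum : ∑ i, lam i = 1) {M : ℝ}
    (hM : ∀ i, ∀ r ∈ (f i).roots, |r| ≤ M) :
    ∀ r ∈ (∑ i, lam i • f i).roots, |r| ≤ M := by
  intro r hr
  have hroot := ((mem_roots (monic_sum_smul hf hd hsum).ne_zero).1 hr).eq_zero
  have hM' : ∀ i y, (f i).IsRoot y → |y| ≤ M := fun i y hy =>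
    hM i y ((mem_roots (hf i).ne_zero).2 hy)
  by_contra! hlt
  rcases lt_abs.1 hlt with h | h
  · have := pos_mul_eval_sum_smul (e := 1) (x := r) hlam hsum fun i => by
      rw [one_mul]
      exact zero_lt_eval_of_roots_lt_of_leadingCoeff_nonneg
        (fun y hy => (le_abs_self y).trans_lt ((hM' i y hy).trans_lt h))
        (by rw [(hf i).leadingCoeff]; exact zero_le_one)
    simp [hroot] at this
  · have := pos_mul_eval_sum_smul (e := Int.negOnePow n) (x := r) hlam hsum fun i => by
      rw [← hd i]
      exact zero_lt_negOnePow_mul_eval_of_lt_roots_of_leadingCoeff_nonneg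
        (fun y hy => by linarith [neg_abs_le y, hM' i y hy])
        (by rw [(hf i).leadingCoeff]; exact zero_le_one)
    simp [hroot] at this

end ConvexCombination

lemma exists_abs_le_of_mem_roots {ι : Type*} [Finite ι] (f : ι → ℝ[X]) :
    ∃ M, ∀ i, ∀ r ∈ (f i).roots, |r| ≤ M := by
  obtain ⟨M, hM⟩ := Finite.exists_le fun i => ((f i).roots.map abs).sum
  refine ⟨M, fun i r hr => le_trans ?_ (hM i)⟩
  exact Multiset.single_le_sum (fun _ hx => by
    obtain ⟨x, -, rfl⟩ := Multiset.mem_map.1 hx; exact abs_nonneg x) _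
    (Multiset.mem_map_of_mem abs hr)

lemma realRooted_and_tendsto_rootVec {α : Type*} {l : Filter α} [l.NeBot] {n : ℕ} {M : ℝ}
    {p : α → ℝ[X]} {F : ℝ[X]}
    (hp : ∀ᶠ a in l, (p a).Monic ∧ RealRooted (p a) ∧ (p a).natDegree = n ∧
      ∀ r ∈ (p a).roots, |r| ≤ M)
    (hF : ∀ x, Tendsto (fun a => (p a).eval x) l (𝓝 (F.eval x))) :
    RealRooted F ∧ Tendsto (fun a => rootVec n (p a)) l (𝓝 (rootVec n F)) := by
  set K : Set (Fin n → ℝ) := Set.univ.pi fun _ => Set.Icc (-M) M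
  have hK : IsCompact K := isCompact_univ_pi fun _ => isCompact_Icc
  have hvK : ∀ᶠ a in l, rootVec n (p a) ∈ K := hp.mono fun a ⟨_, hr, hd, hM⟩ i _ =>
    abs_le.1 (hM _ (rootVec_mem_roots (hr.trans hd) i))
  have hcluster : ∀ r, MapClusterPt r l (fun a => rootVec n (p a)) →
      Monotone r ∧ prodXSubC r = F := by
    intro r hr
    refine ⟨fun i j hij => ?_, Polynomial.funext fun x => ?_⟩
    · exact (isClosed_le (continuous_apply i) (continuous_apply j)).mem_of_mapClusterPt hr
        (hp.mono fun a ⟨_, hr, hd, _⟩ => show _ ≤ _ from rootVec_monotone (hr.trans hd) hij)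
    · have hcont : Continuous fun r : Fin n → ℝ => ∏ i, (x - r i) := by fun_prop
      have hlim : Tendsto (fun a => ∏ i, (x - rootVec n (p a) i)) l (𝓝 (F.eval x)) :=
        (hF x).congr' (hp.mono fun a ⟨hm, hr, hd, _⟩ => by
          rw [eq_prodXSubC_rootVec hm hr hd, eval_prodXSubC])
      rw [eval_prodXSubC]
      exact eq_of_nhds_neBot ((hr.continuousAt_comp hcont.continuousAt).clusterPt.mono hlim)
  obtain ⟨r, -, hr⟩ := hK.exists_mapClusterPt_of_frequently hvK.frequently
  obtain ⟨hr_mono, rfl⟩ := hcluster r hr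
  refine ⟨realRooted_prodXSubC r, hK.tendsto_nhds_of_unique_mapClusterPt hvK fun r' _ hr' => ?_⟩
  obtain ⟨hr'_mono, hr'F⟩ := hcluster r' hr'
  rw [← hr'F, rootVec_prodXSubC hr'_mono]

lemma realRooted_sum_smul_prodXSubC {ι : Type*} [Fintype ι] {n : ℕ} {ρ : ι → Fin n → ℝ}
    (hρ : ∀ i i' (j j' : Fin n), j < j' → ρ i j < ρ i' j') {lam : ι → ℝ}
    (hlam : ∀ i, 0 ≤ lam i) (hsum : ∑ i, lam i = 1) :
    RealRooted (∑ i, lam i • prodXSubC (ρ i)) := by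
  obtain ⟨i₀, -⟩ := exists_pos_of_sum_eq_one hsum
  have hsep : ∀ m : Fin (n + 1), ∃ y, (∀ i (j : Fin n), (j : ℕ) < m → ρ i j < y) ∧
      ∀ i (j : Fin n), (m : ℕ) ≤ j → y < ρ i j := by
    intro m
    obtain ⟨y, hlo, hhi⟩ := Order.exists_between_finsets
      ((Finset.univ.filter fun q : ι × Fin n => (q.2 : ℕ) < m).image fun q => ρ q.1 q.2)
      ((Finset.univ.filter fun q : ι × Fin n => (m : ℕ) ≤ q.2).image fun q => ρ q.1 q.2)
      (by
        simp only [Finset.mem_image, Finset.mem_filter, Finset.mem_univ, true_and]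
        rintro _ ⟨⟨i, j⟩, hj, rfl⟩ _ ⟨⟨i', j'⟩, hj', rfl⟩
        exact hρ i i' j j' (Fin.lt_def.2 (lt_of_lt_of_le hj hj')))
    exact ⟨y, fun i j hj => hlo _ (Finset.mem_image.2 ⟨(i, j), by simpa using hj, rfl⟩),
      fun i j hj => hhi _ (Finset.mem_image.2 ⟨(i, j), by simpa using hj, rfl⟩)⟩
  choose y hylo hyhi using hsep
  have hy : StrictMono y := Fin.strictMono_iff_lt_succ.2 fun m =>
    (hyhi m.castSucc i₀ m le_rfl).trans (hylo m.succ i₀ m (by simp))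
  set F := ∑ i, lam i • prodXSubC (ρ i)
  have hsign : ∀ m : Fin (n + 1), 0 < (-1) ^ (n - m) * F.eval (y m) :=
    fun m => pos_mul_eval_sum_smul hlam hsum fun i =>
      negOnePow_mul_eval_prodXSubC_pos (hylo m i) (hyhi m i)
  have hmonic : ∀ i, (prodXSubC (ρ i)).Monic := fun i => monic_prodXSubC (ρ i)
  have hdeg : ∀ i, (prodXSubC (ρ i)).natDegree = n := fun i => natDegree_prodXSubC (ρ i)
  refine realRooted_of_eval_mul_eval_neg (monic_sum_smul hmonic hdeg hsum).ne_zero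
    (natDegree_sum_smul hmonic hdeg hsum) hy fun m => ?_
  have h1 := hsign m.castSucc
  have h2 := hsign m.succ
  rw [Fin.val_castSucc, show n - (m : ℕ) = n - (m + 1) + 1 by omega, pow_succ] at h1
  rw [Fin.val_succ] at h2
  have hsq : ((-1 : ℝ) ^ (n - (m + 1))) ^ 2 = 1 := by
    rw [← pow_mul, mul_comm, pow_mul]; norm_num
  nlinarith [mul_pos h1 h2]

theorem realRooted_sum_smul_of_rootsPairwiseInterlace {ι : Type*} [Fintype ι] {n : ℕ}
    {f : ι → ℝ[X]} (hf : ∀ i, (f i).Monic) (hr : ∀ i, RealRooted (f i))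
    (hd : ∀ i, (f i).natDegree = n) (hfi : RootsPairwiseInterlace n f) {lam : ι → ℝ}
    (hlam : ∀ i, 0 ≤ lam i) (hsum : ∑ i, lam i = 1) : RealRooted (∑ i, lam i • f i) := by
  set ρ : ℝ → ι → Fin n → ℝ := fun ε i j => rootVec n (f i) j + (j + 1) * ε
  have hρ : ∀ ε > 0, ∀ i i' (j j' : Fin n), j < j' → ρ ε i j < ρ ε i' j' := by
    intro ε hε i i' j j' hjj'
    have : (j : ℝ) < j' := by exact_mod_cast hjj'
    have := hfi i i' j j' hjj'
    simp only [ρ]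
    nlinarith
  obtain ⟨M, hM⟩ := exists_abs_le_of_mem_roots f
  have hρM : ∀ ε ∈ Set.Ioo (0 : ℝ) 1, ∀ i, ∀ r ∈ (prodXSubC (ρ ε i)).roots,
      |r| ≤ M + n := by
    rintro ε ⟨hε0, hε1⟩ i r hmem
    rw [roots_prodXSubC] at hmem
    obtain ⟨j, -, rfl⟩ := Multiset.mem_map.1 hmem
    have hj : (j : ℝ) + 1 ≤ n := by exact_mod_cast j.2
    calc |ρ ε i j| ≤ |rootVec n (f i) j| + (j + 1) * ε := by
          simpa [abs_of_pos hε0, abs_mul, abs_of_nonneg (by positivity : (0 : ℝ) ≤ j + 1)]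
            using abs_add_le (rootVec n (f i) j) ((j + 1) * ε)
      _ ≤ M + n := by nlinarith [hM i _ (rootVec_mem_roots ((hr i).trans (hd i)) j)]
  have hmonic : ∀ ε i, (prodXSubC (ρ ε i)).Monic := fun ε i => monic_prodXSubC _
  have hdeg : ∀ ε i, (prodXSubC (ρ ε i)).natDegree = n := fun ε i => natDegree_prodXSubC _
  refine (realRooted_and_tendsto_rootVec (l := 𝓝[>] 0) (n := n) (M := M + n)
    (p := fun ε => ∑ i, lam i • prodXSubC (ρ ε i)) ?_ fun x => ?_).1
  · filter_upwards [Ioo_mem_nhdsGT one_pos] with ε hε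
    exact ⟨monic_sum_smul (hmonic ε) (hdeg ε) hsum,
      realRooted_sum_smul_prodXSubC (hρ ε hε.1) hlam hsum,
      natDegree_sum_smul (hmonic ε) (hdeg ε) hsum,
      abs_le_of_mem_roots_sum_smul (hmonic ε) (hdeg ε) hlam hsum (hρM ε hε)⟩
  · have hcont : Continuous fun ε => (∑ i, lam i • prodXSubC (ρ ε i)).eval x := by
      simp only [eval_finsetSum, eval_smul, eval_prodXSubC, smul_eq_mul, ρ]
      fun_prop
    have hρ0 : ∀ i, prodXSubC (ρ 0 i) = f i := fun i => by
      simp only [ρ, mul_zero, add_zero]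
      exact (eq_prodXSubC_rootVec (hf i) (hr i) (hd i)).symm
    simpa [hρ0] using (hcont.tendsto 0).mono_left nhdsWithin_le_nhds

namespace Polynomial

section Wronskian

variable {R : Type*} [CommRing R]

lemma wronskian_ne_zero_of_natDegree_lt [IsDomain R] [CharZero R] {a b : R[X]} (hb : b ≠ 0)
    (hlt : b.natDegree < a.natDegree) : wronskian a b ≠ 0 := by
  have ha : a.leadingCoeff ≠ 0 := leadingCoeff_ne_zero.2 (ne_zero_of_natDegree_gt hlt)
  obtain ⟨n, hn⟩ : ∃ n, a.natDegree = n + 1 := Nat.exists_eq_add_one_of_ne_zero (by omega)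
  have ha' : (derivative a).coeff n = a.leadingCoeff * (n + 1) := by
    rw [coeff_derivative, leadingCoeff, hn]
  have ha'_deg : (derivative a).natDegree ≤ n := by
    have := natDegree_derivative_le a; omega
  obtain hb0 | ⟨e, he⟩ : b.natDegree = 0 ∨ ∃ e, b.natDegree = e + 1 := by
    cases b.natDegree <;> simp
  · rw [eq_C_of_natDegree_eq_zero hb0, wronskian, derivative_C, mul_zero, zero_sub, neg_ne_zero]
    refine mul_ne_zero (fun h => ?_) (by simpa [← eq_C_of_natDegree_eq_zero hb0] using hb)
    simp [h, ha, Nat.cast_add_one_ne_zero] at ha'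
  · have hb' : (derivative b).coeff e = b.leadingCoeff * (e + 1) := by
      rw [coeff_derivative, leadingCoeff, he]
    have hb'_deg : (derivative b).natDegree ≤ e := by
      have := natDegree_derivative_le b; omega
    intro hW
    have hcoeff := congrArg (coeff · (n + 1 + e)) hW
    simp only [wronskian, coeff_sub, coeff_zero] at hcoeff
    rw [coeff_mul_add_eq_of_natDegree_le hn.le hb'_deg, show n + 1 + e = n + (e + 1) by ring,
      coeff_mul_add_eq_of_natDegree_le ha'_deg he.le, ← hn, ← he, hb', ha'] at hcoeff
    change a.leadingCoeff * _ - _ * b.leadingCoeff = 0 at hcoeff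
    have hne : (e : R) + 1 - (n + 1) ≠ 0 := by
      rw [sub_ne_zero]; exact_mod_cast (by omega : e + 1 ≠ n + 1)
    exact mul_ne_zero (mul_ne_zero ha (leadingCoeff_ne_zero.2 hb)) hne
      (by linear_combination hcoeff)

lemma Monic.eq_of_wronskian_eq_zero [IsDomain R] [CharZero R] {P Q : R[X]}
    (hP : P.Monic) (hQ : Q.Monic) (hd : P.natDegree = Q.natDegree) (hW : wronskian P Q = 0) :
    P = Q := by
  by_contra hne
  have hD : Q - P ≠ 0 := sub_ne_zero.2 (Ne.symm hne)
  have hlt : (Q - P).natDegree < P.natDegree := by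
    refine natDegree_lt_natDegree hD (degree_sub_lt_left ?_ hQ.ne_zero ?_) |>.trans_eq hd.symm
    · rw [degree_eq_natDegree hQ.ne_zero, degree_eq_natDegree hP.ne_zero, hd]
    · rw [hQ.leadingCoeff, hP.leadingCoeff]
  refine wronskian_ne_zero_of_natDegree_lt hD hlt ?_
  rw [sub_eq_add_neg, wronskian_add_right, wronskian_neg_right, wronskian_self_eq_zero, hW]
  simp

lemma wronskian_eval_eq_zero_of_sq_dvd {P Q : R[X]} {τ c : R}
    (h : (X - C c) ^ 2 ∣ (1 - τ) • P + τ • Q) : (wronskian P Q).eval c = 0 := by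
  have h0 : ((1 - τ) • P + τ • Q).IsRoot c :=
    dvd_iff_isRoot.1 ((dvd_pow_self _ two_ne_zero).trans h)
  have h1 : (derivative ((1 - τ) • P + τ • Q)).IsRoot c :=
    dvd_iff_isRoot.1 (by simpa using pow_sub_one_dvd_derivative_of_pow_dvd h)
  simp only [IsRoot, eval_add, eval_smul, smul_eq_mul, derivative_add, derivative_smul] at h0 h1
  simp only [wronskian, eval_sub, eval_mul]
  linear_combination ((derivative Q).eval c - (derivative P).eval c) * h0 +
    (P.eval c - Q.eval c) * h1

end Wronskian

end Polynomial

lemma sq_dvd_prodXSubC {n : ℕ} {r : Fin n → ℝ} {i j : Fin n} (hij : i ≠ j) {c : ℝ}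
    (hi : r i = c) (hj : r j = c) : (X - C c) ^ 2 ∣ prodXSubC r := by
  have := Finset.prod_dvd_prod_of_subset {i, j} Finset.univ (fun k => X - C (r k))
    (Finset.subset_univ _)
  rwa [Finset.prod_pair hij, hi, hj, ← sq] at this

section Segment

variable {n : ℕ} {P Q : ℝ[X]}

lemma segment_eq_sum_smul (t : ℝ) :
    (1 - t) • P + t • Q = ∑ i, ![1 - t, t] i • ![P, Q] i := by
  simp [Fin.sum_univ_two]

lemma monic_segment (hP : P.Monic) (hQ : Q.Monic) (hPd : P.natDegree = n)
    (hQd : Q.natDegree = n) (t : ℝ) : ((1 - t) • P + t • Q).Monic := by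
  rw [segment_eq_sum_smul]
  exact monic_sum_smul (Fin.forall_fin_two.2 ⟨hP, hQ⟩) (Fin.forall_fin_two.2 ⟨hPd, hQd⟩)
    (by simp [Fin.sum_univ_two])

lemma natDegree_segment (hP : P.Monic) (hQ : Q.Monic) (hPd : P.natDegree = n)
    (hQd : Q.natDegree = n) (t : ℝ) : ((1 - t) • P + t • Q).natDegree = n := by
  rw [segment_eq_sum_smul]
  exact natDegree_sum_smul (Fin.forall_fin_two.2 ⟨hP, hQ⟩) (Fin.forall_fin_two.2 ⟨hPd, hQd⟩)
    (by simp [Fin.sum_univ_two])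

lemma continuousOn_rootVec_segment (hP : P.Monic) (hQ : Q.Monic) (hPd : P.natDegree = n)
    (hQd : Q.natDegree = n)
    (hseg : ∀ t ∈ Set.Icc (0 : ℝ) 1, RealRooted ((1 - t) • P + t • Q)) :
    ContinuousOn (fun t : ℝ => rootVec n ((1 - t) • P + t • Q)) (Set.Icc 0 1) := by
  obtain ⟨M, hM⟩ := exists_abs_le_of_mem_roots ![P, Q]
  intro t₀ ht₀
  have : (𝓝[Set.Icc (0 : ℝ) 1] t₀).NeBot :=
    mem_closure_iff_nhdsWithin_neBot.1 (subset_closure ht₀)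
  refine (realRooted_and_tendsto_rootVec (M := M) ?_ fun x => ?_).2
  · filter_upwards [self_mem_nhdsWithin] with t ht
    refine ⟨monic_segment hP hQ hPd hQd t, hseg t ht, natDegree_segment hP hQ hPd hQd t, ?_⟩
    rw [segment_eq_sum_smul]
    exact abs_le_of_mem_roots_sum_smul (Fin.forall_fin_two.2 ⟨hP, hQ⟩)
      (Fin.forall_fin_two.2 ⟨hPd, hQd⟩) (Fin.forall_fin_two.2 ⟨sub_nonneg.2 ht.2, ht.1⟩)
      (by simp [Fin.sum_univ_two]) hM
  · have hcont : Continuous fun t : ℝ => ((1 - t) • P + t • Q).eval x := by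
      simp only [eval_add, eval_smul, smul_eq_mul]
      fun_prop
    exact (hcont.tendsto t₀).mono_left nhdsWithin_le_nhds

lemma wronskian_eval_eq_zero_of_rootVec_lt (hP : P.Monic) (hQ : Q.Monic) (hPd : P.natDegree = n)
    (hQd : Q.natDegree = n)
    (hseg : ∀ t ∈ Set.Icc (0 : ℝ) 1, RealRooted ((1 - t) • P + t • Q))
    {j j' : Fin n} (hjj' : j < j') {c : ℝ} (hc : c ∈ Set.Ioo (rootVec n Q j') (rootVec n P j))
    (hPc : P.eval c ≠ 0) : (wronskian P Q).eval c = 0 := by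
  set h : ℝ → ℝ[X] := fun t => (1 - t) • P + t • Q
  have hcross : ∀ k : Fin n, rootVec n Q k ≤ c → c ≤ rootVec n P k →
      ∃ τ ∈ Set.Icc (0 : ℝ) 1, rootVec n (h τ) k = c := fun k h1 h0 => by
    simpa [h] using intermediate_value_Icc' zero_le_one
      ((continuous_apply k).comp_continuousOn (continuousOn_rootVec_segment hP hQ hPd hQd hseg))
      (by simpa using ⟨h1, h0⟩)
  have hroot : ∀ τ ∈ Set.Icc (0 : ℝ) 1, ∀ k, (h τ).eval (rootVec n (h τ) k) = 0 :=
    fun τ hτ k => (mem_roots (monic_segment hP hQ hPd hQd τ).ne_zero).1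
      (rootVec_mem_roots ((hseg τ hτ).trans (natDegree_segment hP hQ hPd hQd τ)) k)
  have hPr : RealRooted P := by simpa using hseg 0 (by simp)
  have hQr : RealRooted Q := by simpa using hseg 1 (by simp)
  obtain ⟨τ, hτ, hτc⟩ := hcross j
    ((rootVec_monotone (hQr.trans hQd) hjj'.le).trans hc.1.le) hc.2.le
  obtain ⟨τ', hτ', hτ'c⟩ := hcross j' hc.1.le
    (hc.2.le.trans (rootVec_monotone (hPr.trans hPd) hjj'.le))
  have e₁ := hroot τ hτ j
  have e₂ := hroot τ' hτ' j'
  rw [hτc] at e₁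
  rw [hτ'c] at e₂
  simp only [h, eval_add, eval_smul, smul_eq_mul] at e₁ e₂
  have hττ' : τ = τ' := by
    have : (τ - τ') * (Q.eval c - P.eval c) = 0 := by linear_combination e₁ - e₂
    refine sub_eq_zero.1 ((mul_eq_zero.1 this).resolve_right fun hPQ => hPc ?_)
    linear_combination e₁ - τ * hPQ
  subst hττ'
  have hsq := sq_dvd_prodXSubC hjj'.ne hτc hτ'c
  rw [← eq_prodXSubC_rootVec (monic_segment hP hQ hPd hQd τ) (hseg τ hτ)
    (natDegree_segment hP hQ hPd hQd τ)] at hsq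
  exact wronskian_eval_eq_zero_of_sq_dvd hsq

theorem rootVec_le_rootVec_of_segment (hP : P.Monic) (hQ : Q.Monic) (hPd : P.natDegree = n)
    (hQd : Q.natDegree = n)
    (hseg : ∀ t ∈ Set.Icc (0 : ℝ) 1, RealRooted ((1 - t) • P + t • Q))
    {j j' : Fin n} (hjj' : j < j') : rootVec n P j ≤ rootVec n Q j' := by
  by_contra! hlt
  have hPQ : P = Q := by
    refine hP.eq_of_wronskian_eq_zero hQ (hPd.trans hQd.symm) (eq_zero_of_infinite_isRoot _ ?_)
    refine ((Set.Ioo_infinite hlt).sdiff (P.finite_setOfPred_isRoot hP.ne_zero)).mono ?_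
    exact fun c ⟨hc, hPc⟩ =>
      wronskian_eval_eq_zero_of_rootVec_lt hP hQ hPd hQd hseg hjj' hc hPc
  subst hPQ
  have hPr : RealRooted P := by simpa using hseg 0 (by simp)
  exact (rootVec_monotone (hPr.trans hPd) hjj'.le).not_gt hlt

end Segment

theorem rootsPairwiseInterlace_of_forall_realRooted_sum_smul {ι : Type*} [Fintype ι]
    [DecidableEq ι] {n : ℕ} {f : ι → ℝ[X]} (hf : ∀ i, (f i).Monic)
    (hd : ∀ i, (f i).natDegree = n)
    (hrr : ∀ lam : ι → ℝ, (∀ i, 0 ≤ lam i) → ∑ i, lam i = 1 →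
      RealRooted (∑ i, lam i • f i)) :
    RootsPairwiseInterlace n f := by
  intro i i' j j' hjj'
  refine rootVec_le_rootVec_of_segment (hf i) (hf i') (hd i) (hd i') (fun t ht => ?_) hjj'
  have := hrr (fun k => (if k = i then 1 - t else 0) + if k = i' then t else 0)
    (fun k => add_nonneg (by split_ifs <;> linarith [ht.2]) (by split_ifs <;> linarith [ht.1]))
    (by simp [Finset.sum_add_distrib])
  simpa [add_smul, ite_smul, Finset.sum_add_distrib] using this

lemma realRooted_of_forall_realRooted_sum_smul {ι : Type*} [Fintype ι] [DecidableEq ι]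
    {f : ι → ℝ[X]}
    (hrr : ∀ lam : ι → ℝ, (∀ i, 0 ≤ lam i) → ∑ i, lam i = 1 →
      RealRooted (∑ i, lam i • f i))
    (i : ι) : RealRooted (f i) := by
  simpa [ite_smul] using hrr (fun k => if k = i then 1 else 0) (fun k => by positivity) (by simp)

/-- Monic real polynomials of a common degree have a common interlacing iff every
convex combination of them is real-rooted. -/
theorem commonInterlacing_iff_convex_realRooted (n k : ℕ) (hn : 0 < n)
    (f : Fin k → Polynomial ℝ) (hmonic : ∀ i, (f i).Monic)
    (hdeg : ∀ i, (f i).natDegree = n) :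
    (∃ g : Polynomial ℝ, g.Monic ∧ ∀ i, Interlaces g (f i)) ↔
      ∀ lam : Fin k → ℝ, (∀ i, 0 ≤ lam i) → (∑ i, lam i) = 1 →
        RealRooted (∑ i, lam i • f i) := by
  obtain ⟨n, rfl⟩ := Nat.exists_eq_add_one_of_ne_zero hn.ne'
  rw [exists_interlaces_iff_rootsPairwiseInterlace hdeg]
  exact ⟨fun ⟨hr, hpi⟩ _ hlam hsum =>
      realRooted_sum_smul_of_rootsPairwiseInterlace hmonic hr hdeg hpi hlam hsum,
    fun hrr => ⟨realRooted_of_forall_realRooted_sum_smul hrr,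
      rootsPairwiseInterlace_of_forall_realRooted_sum_smul hmonic hdeg hrr⟩⟩
end

section
/- Let f_1,…,f_k be monic real-rooted polynomials of degree n with a common interlacing. Then there exists an index i such that the largest root of f_i is at most the largest root of f_1 + f_2 + … + f_k. -/
open scoped Classical
open Polynomial

/-!
Let `i₀` minimise `m := maxRoot (f i₀)`. By the common interlacing `g`, every root of `f i`
other than its largest lies below a root of `g`, hence below the largest root of `f i₀`, which
is `m`; and the largest root of `f i` is at least `m` by minimality. So in the product
`f i (m) = ∏ (m - β)` over the roots `β` of the monic `f i`, only the factor of the largest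
root is nonpositive, and `f i (m) ≤ 0`.
Hence `∑ f i` is nonpositive at `m` and has positive leading coefficient, so by the
intermediate value theorem it has a root at or beyond `m`.
-/

lemma mem_sortedRoots {f : ℝ[X]} (hf : f ≠ 0) {x : ℝ} : x ∈ sortedRoots f ↔ f.IsRoot x := by
  rw [← Multiset.mem_coe, sortedRoots, Multiset.sort_eq, mem_roots hf]

lemma RealRooted.length_sortedRoots {f : ℝ[X]} (hf : RealRooted f) :
    (sortedRoots f).length = f.natDegree :=
  (Multiset.length_sort _).trans hf

lemma RealRooted.eval_eq_prod_sortedRoots {f : ℝ[X]} (hmonic : f.Monic) (hf : RealRooted f)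
    (x : ℝ) : f.eval x = ((sortedRoots f).map (x - ·)).prod := by
  rw [sortedRoots, ← Multiset.prod_coe, ← Multiset.map_coe, Multiset.sort_eq]
  conv_lhs => rw [← prod_multiset_X_sub_C_of_monic_of_roots_card_eq hmonic hf]
  simp [eval_multiset_prod]

lemma le_maxRoot_of_isRoot {f : ℝ[X]} (hf : f ≠ 0) {x : ℝ} (hx : f.IsRoot x) : x ≤ maxRoot f :=
  le_csSup (f.finite_setOfPred_isRoot hf).bddAbove hx

lemma maxRoot_eq_getLast {f : ℝ[X]} (hf : f ≠ 0) (hne : sortedRoots f ≠ []) :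
    maxRoot f = (sortedRoots f).getLast hne := by
  refine IsGreatest.csSup_eq ⟨(mem_sortedRoots hf).1 (List.getLast_mem hne), fun x hx => ?_⟩
  exact (Multiset.pairwise_sort _ _).rel_getLast ((mem_sortedRoots hf).2 hx)

lemma le_maxRoot_of_eval_nonpos {p : ℝ[X]} (hp : 0 < p.leadingCoeff) {x : ℝ}
    (hx : p.eval x ≤ 0) : x ≤ maxRoot p := by
  have hdeg : 0 < p.degree := by
    by_contra! h
    rw [eq_C_of_degree_le_zero h] at hp hx
    rw [leadingCoeff_C] at hp
    rw [eval_C] at hx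
    linarith
  obtain ⟨y, hxy, hy⟩ := ((Filter.eventually_ge_atTop x).and
    ((p.tendsto_atTop_of_leadingCoeff_nonneg hdeg hp.le).eventually_ge_atTop 0)).exists
  obtain ⟨c, hc, hroot⟩ := intermediate_value_Icc hxy p.continuousOn ⟨hx, hy⟩
  exact hc.1.trans (le_maxRoot_of_isRoot (leadingCoeff_ne_zero.1 hp.ne') hroot)

lemma Polynomial.Monic.eval_nonpos_of_dropLast_le {f : ℝ[X]} (hmonic : f.Monic) (hf : RealRooted f)
    (hdeg : 0 < f.natDegree) {x : ℝ} (hlow : ∀ a ∈ (sortedRoots f).dropLast, a ≤ x)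
    (hx : x ≤ maxRoot f) : f.eval x ≤ 0 := by
  have hne : sortedRoots f ≠ [] := List.ne_nil_of_length_pos (hf.length_sortedRoots ▸ hdeg)
  rw [hf.eval_eq_prod_sortedRoots hmonic, ← List.dropLast_concat_getLast hne, List.map_append,
    List.prod_append, List.map_singleton, List.prod_singleton]
  refine mul_nonpos_of_nonneg_of_nonpos (List.prod_nonneg fun y hy => ?_) ?_
  · obtain ⟨a, ha, rfl⟩ := List.mem_map.1 hy
    exact sub_nonneg.2 (hlow a ha)
  · rw [← maxRoot_eq_getLast hmonic.ne_zero hne]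
    exact sub_nonpos.2 hx

lemma Interlaces.natDegree_pos {g f : ℝ[X]} (h : Interlaces g f) : 0 < f.natDegree :=
  h.2.2.1 ▸ Nat.succ_pos _

lemma Interlaces.le_maxRoot_of_mem_dropLast {g f f' : ℝ[X]} (h : Interlaces g f)
    (h' : Interlaces g f') {a : ℝ} (ha : a ∈ (sortedRoots f).dropLast) : a ≤ maxRoot f' := by
  obtain ⟨j, hj, rfl⟩ := List.mem_iff_getElem.1 ha
  have hjg : j < g.natDegree := by
    rw [List.length_dropLast, h.1.length_sortedRoots] at hj
    have := h.2.2.1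
    omega
  have hf'len : j + 1 < (sortedRoots f').length := by
    rw [h'.1.length_sortedRoots, ← h'.2.2.1]
    omega
  have hf' : f' ≠ 0 := ne_zero_of_natDegree_gt h'.natDegree_pos
  calc (sortedRoots f).dropLast[j]
      = (sortedRoots f).getD j 0 := by rw [List.getElem_dropLast, List.getD_eq_getElem]
    _ ≤ (sortedRoots g).getD j 0 := (h.2.2.2 j hjg).1
    _ ≤ (sortedRoots f').getD (j + 1) 0 := (h'.2.2.2 j hjg).2
    _ ≤ maxRoot f' := by
      rw [List.getD_eq_getElem _ _ hf'len]
      exact le_maxRoot_of_isRoot hf' ((mem_sortedRoots hf').1 (List.getElem_mem hf'len))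

lemma leadingCoeff_sum_of_monic {R ι : Type*} [Semiring R] [CharZero R] {s : Finset ι}
    (hs : s.Nonempty) {f : ι → R[X]} {n : ℕ} (hmonic : ∀ i ∈ s, (f i).Monic)
    (hdeg : ∀ i ∈ s, (f i).natDegree = n) : (∑ i ∈ s, f i).leadingCoeff = s.card := by
  have hsum : ∑ i ∈ s, (f i).leadingCoeff = s.card := by
    simp [Finset.sum_congr rfl fun i hi => (hmonic i hi).leadingCoeff]
  rw [leadingCoeff_sum_of_degree_eq (d := n) ?_ (hsum ▸ Nat.cast_ne_zero.2 hs.card_ne_zero), hsum]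
  intro i hi
  rw [degree_eq_natDegree (hmonic i hi).ne_zero, hdeg i hi]

/-- If monic real-rooted polynomials of degree `n` have a common interlacing, then some
member has largest root at most the largest root of their sum. -/
theorem exists_maxRoot_le_maxRoot_sum (n k : ℕ) (hk : 0 < k) (f : Fin k → Polynomial ℝ)
    (hmonic : ∀ i, (f i).Monic) (hdeg : ∀ i, (f i).natDegree = n)
    (hrr : ∀ i, RealRooted (f i))
    (hcommon : ∃ g : Polynomial ℝ, g.Monic ∧ ∀ i, Interlaces g (f i)) :
    ∃ i, maxRoot (f i) ≤ maxRoot (∑ i, f i) := by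
  obtain ⟨g, -, hint⟩ := hcommon
  have huniv : (Finset.univ : Finset (Fin k)).Nonempty := ⟨⟨0, hk⟩, Finset.mem_univ _⟩
  obtain ⟨i₀, -, hmin⟩ := Finset.univ.exists_min_image (fun i => maxRoot (f i)) huniv
  refine ⟨i₀, le_maxRoot_of_eval_nonpos ?_ ?_⟩
  · rw [leadingCoeff_sum_of_monic huniv (fun i _ => hmonic i) (fun i _ => hdeg i)]
    exact_mod_cast huniv.card_pos
  · rw [eval_finsetSum]
    exact Finset.sum_nonpos fun i _ => (hmonic i).eval_nonpos_of_dropLast_le (hrr i)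
      (hint i).natDegree_pos (fun a ha => (hint i).le_maxRoot_of_mem_dropLast (hint i₀) ha)
      (hmin i (Finset.mem_univ i))
end
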